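/- Let P be a set of n points in ℝ^d, let k ≥ 1 divide n, and let (c_i, r_i, P_i), i = 1, …, n/k, be a 2-approximate quorum clustering of P with parameter k. Then for every query point q ∈ ℝ^d there exists an index i ∈ {1, …, n/k} such that: (i) the closed ball B(c_i, r_i) intersects the closed ball B(q, d_k(P,q)); (ii) r_i ≤ 2 · d_k(P,q); and (iii) ‖q − c_i‖ ≤ 3 · d_k(P,q). -/
import Mathlib

open Metric

/-- The `k`-th nearest neighbor distance of `q` to the finite point set `P`. -/
noncomputable def kthNNDist {d : ℕ} (k : ℕ) (P : Finset (EuclideanSpace ℝ (Fin d)))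
    (q : EuclideanSpace ℝ (Fin d)) : ℝ :=
  sInf {r : ℝ | 0 ≤ r ∧ k ≤ (P.filter fun p => dist q p ≤ r).card}

/-- `rad_k Q`: the radius of the smallest closed ball containing at least `k` points of `Q`. -/
noncomputable def radk {d : ℕ} (k : ℕ) (Q : Finset (EuclideanSpace ℝ (Fin d))) : ℝ :=
  sInf (Set.range fun q => kthNNDist k Q q)

lemma kthNNDist_nonneg {d : ℕ} (k : ℕ) (P : Finset (EuclideanSpace ℝ (Fin d)))
    (q : EuclideanSpace ℝ (Fin d)) : 0 ≤ kthNNDist k P q :=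
  Real.sInf_nonneg (fun _ hx => hx.1)

lemma kthNNDist_le {d : ℕ} {k : ℕ} {P : Finset (EuclideanSpace ℝ (Fin d))}
    {q : EuclideanSpace ℝ (Fin d)} {r : ℝ} (hr : 0 ≤ r)
    (h : k ≤ (P.filter fun p => dist q p ≤ r).card) : kthNNDist k P q ≤ r :=
  csInf_le ⟨0, fun _ hx => hx.1⟩ ⟨hr, h⟩

lemma kthNNDist_spec {d : ℕ} {k : ℕ} {P : Finset (EuclideanSpace ℝ (Fin d))}
    (hk : 1 ≤ k) (hkP : k ≤ P.card) (q : EuclideanSpace ℝ (Fin d)) :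
    k ≤ (P.filter fun p => dist q p ≤ kthNNDist k P q).card := by
  classical
  set S : Set ℝ := {r : ℝ | 0 ≤ r ∧ k ≤ (P.filter fun p => dist q p ≤ r).card} with hS
  have hPne : P.Nonempty := Finset.card_pos.mp (lt_of_lt_of_le hk hkP)
  obtain ⟨p0, hp0⟩ := hPne
  have hIne : (P.image fun p => dist q p).Nonempty := ⟨dist q p0, Finset.mem_image_of_mem _ hp0⟩
  set R : ℝ := (P.image fun p => dist q p).max' hIne with hRdef
  have hR0 : 0 ≤ R := by
    obtain ⟨p, _, hp⟩ := Finset.mem_image.mp ((P.image fun p => dist q p).max'_mem hIne)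
    rw [hRdef, ← hp]; exact dist_nonneg
  have hRmem : R ∈ S := by
    refine ⟨hR0, ?_⟩
    have : P.filter (fun p => dist q p ≤ R) = P := by
      apply Finset.filter_true_of_mem
      intro p hp
      exact Finset.le_max' _ _ (Finset.mem_image_of_mem _ hp)
    rw [this]; exact hkP
  have hSne : S.Nonempty := ⟨R, hRmem⟩
  have hbdd : BddBelow S := ⟨0, fun _ hx => hx.1⟩
  have hρ : kthNNDist k P q = sInf S := rfl
  by_contra hcon
  push_neg at hcon
  set ρ := kthNNDist k P q with hρdef
  -- points strictly farther than ρ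
  set T : Finset (EuclideanSpace ℝ (Fin d)) := P.filter fun p => ρ < dist q p with hT
  have hTne : T.Nonempty := by
    by_contra hTe
    rw [Finset.not_nonempty_iff_eq_empty] at hTe
    have : P.filter (fun p => dist q p ≤ ρ) = P := by
      apply Finset.filter_true_of_mem
      intro p hp
      by_contra hlt
      push_neg at hlt
      have : p ∈ T := Finset.mem_filter.mpr ⟨hp, hlt⟩
      simp [hTe] at this
    rw [this] at hcon
    exact absurd hkP (not_le.mpr hcon)
  have hTIne : (T.image fun p => dist q p).Nonempty := hTne.image _
  set m : ℝ := (T.image fun p => dist q p).min' hTIne with hm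
  have hρm : ρ < m := by
    obtain ⟨p, hp, hdp⟩ := Finset.mem_image.mp ((T.image fun p => dist q p).min'_mem hTIne)
    rw [hm, ← hdp]
    exact (Finset.mem_filter.mp hp).2
  have hmle : m ≤ ρ := by
    rw [hρ]
    apply le_csInf hSne
    intro r hr
    -- count(r) ≥ k > count(ρ), so some point in filter r not in filter ρ
    have hnotsub : ¬ (P.filter (fun p => dist q p ≤ r) ⊆ P.filter (fun p => dist q p ≤ ρ)) := by
      intro hsub
      exact absurd (le_trans hr.2 (Finset.card_le_card hsub)) (not_le.mpr hcon)
    obtain ⟨p, hpr, hpρ⟩ := Finset.not_subset.mp hnotsub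
    have hpP : p ∈ P := (Finset.mem_filter.mp hpr).1
    have hpd : dist q p ≤ r := (Finset.mem_filter.mp hpr).2
    have hpgt : ρ < dist q p := by
      by_contra h'
      push_neg at h'
      exact hpρ (Finset.mem_filter.mpr ⟨hpP, h'⟩)
    have : p ∈ T := Finset.mem_filter.mpr ⟨hpP, hpgt⟩
    calc m ≤ dist q p := Finset.min'_le _ _ (Finset.mem_image_of_mem _ this)
    _ ≤ r := hpd
  exact absurd hmle (not_le.mpr hρm)

lemma radk_le_kth {d : ℕ} (k : ℕ) (Q : Finset (EuclideanSpace ℝ (Fin d)))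
    (q : EuclideanSpace ℝ (Fin d)) : radk k Q ≤ kthNNDist k Q q := by
  apply csInf_le
  · exact ⟨0, by rintro x ⟨q', rfl⟩; exact kthNNDist_nonneg k Q q'⟩
  · exact ⟨q, rfl⟩

open Classical in
/-- Existence of an anchor cluster: for any 2-approximate quorum clustering of `P` and any
query `q`, there is an index `i` with `B(c i, r i) ∩ B(q, d_k(P,q)) ≠ ∅`,
`r i ≤ 2 d_k(P,q)` and `‖q - c i‖ ≤ 3 d_k(P,q)`. -/
theorem exists_anchor_cluster {d n k : ℕ} (hk : 1 ≤ k) (hdvd : k ∣ n)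
    (hn : 0 < n) (P : Finset (EuclideanSpace ℝ (Fin d))) (hP : P.card = n)
    (c : Fin (n / k) → EuclideanSpace ℝ (Fin d)) (r : Fin (n / k) → ℝ)
    (Q : Fin (n / k) → Finset (EuclideanSpace ℝ (Fin d)))
    (hdisj : ∀ i j, i ≠ j → Disjoint (Q i) (Q j))
    (hunion : Finset.univ.biUnion Q = P)
    (hcard : ∀ i, (Q i).card = k)
    (hcover : ∀ i, ↑(Q i) ⊆ closedBall (c i) (r i))
    (happrox : ∀ i,
      r i / 2 ≤ radk k (P \ (Finset.univ.filter fun j => j < i).biUnion Q) ∧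
      radk k (P \ (Finset.univ.filter fun j => j < i).biUnion Q) ≤ r i)
    (q : EuclideanSpace ℝ (Fin d)) :
    ∃ i : Fin (n / k),
      (closedBall (c i) (r i) ∩ closedBall q (kthNNDist k P q)).Nonempty ∧
      r i ≤ 2 * kthNNDist k P q ∧
      dist q (c i) ≤ 3 * kthNNDist k P q := by
  classical
  set ρ := kthNNDist k P q with hρ
  have hρ0 : 0 ≤ ρ := kthNNDist_nonneg k P q
  have hkP : k ≤ P.card := hP ▸ Nat.le_of_dvd hn hdvd
  have hspec : k ≤ (P.filter fun p => dist q p ≤ ρ).card := kthNNDist_spec hk hkP q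
  -- there is a point of P within ρ of q
  have hne : (P.filter fun p => dist q p ≤ ρ).Nonempty :=
    Finset.card_pos.mp (lt_of_lt_of_le hk hspec)
  -- indices whose cluster meets the ball
  set I : Finset (Fin (n / k)) :=
    Finset.univ.filter (fun i => ∃ p ∈ Q i, dist q p ≤ ρ) with hI
  have hIne : I.Nonempty := by
    obtain ⟨p, hp⟩ := hne
    have hpP : p ∈ P := (Finset.mem_filter.mp hp).1
    have hpd : dist q p ≤ ρ := (Finset.mem_filter.mp hp).2
    rw [← hunion] at hpP
    obtain ⟨i, _, hpi⟩ := Finset.mem_biUnion.mp hpP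
    exact ⟨i, Finset.mem_filter.mpr ⟨Finset.mem_univ _, ⟨p, hpi, hpd⟩⟩⟩
  set i := I.min' hIne with hi
  have hiI : i ∈ I := I.min'_mem hIne
  obtain ⟨p₀, hp₀Q, hp₀d⟩ := (Finset.mem_filter.mp hiI).2
  -- minimality
  have hmin : ∀ j : Fin (n / k), j < i → ∀ p ∈ Q j, ¬ dist q p ≤ ρ := by
    intro j hj p hpQ hpd
    have : j ∈ I := Finset.mem_filter.mpr ⟨Finset.mem_univ _, ⟨p, hpQ, hpd⟩⟩
    exact absurd (I.min'_le j this) (not_le.mpr hj)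
  -- the residual set
  set R : Finset (EuclideanSpace ℝ (Fin d)) :=
    P \ (Finset.univ.filter fun j => j < i).biUnion Q with hR
  have hsub : P.filter (fun p => dist q p ≤ ρ) ⊆ R.filter (fun p => dist q p ≤ ρ) := by
    intro p hp
    have hpP : p ∈ P := (Finset.mem_filter.mp hp).1
    have hpd : dist q p ≤ ρ := (Finset.mem_filter.mp hp).2
    refine Finset.mem_filter.mpr ⟨Finset.mem_sdiff.mpr ⟨hpP, ?_⟩, hpd⟩
    intro hmem
    obtain ⟨j, hj, hpj⟩ := Finset.mem_biUnion.mp hmem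
    exact hmin j (Finset.mem_filter.mp hj).2 p hpj hpd
  have hkR : k ≤ (R.filter fun p => dist q p ≤ ρ).card :=
    le_trans hspec (Finset.card_le_card hsub)
  have hkthR : kthNNDist k R q ≤ ρ := kthNNDist_le hρ0 hkR
  have hradR : radk k R ≤ ρ := le_trans (radk_le_kth k R q) hkthR
  have hri : r i ≤ 2 * ρ := by
    have h1 := (happrox i).1
    rw [← hR] at h1
    linarith
  refine ⟨i, ⟨p₀, ?_, ?_⟩, hri, ?_⟩
  · exact hcover i hp₀Q
  · exact mem_closedBall'.mpr hp₀d
  · have h1 : dist q (c i) ≤ dist q p₀ + dist p₀ (c i) := dist_triangle _ _ _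
    have h2 : dist p₀ (c i) ≤ r i := mem_closedBall.mp (hcover i hp₀Q)
    linarith
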